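/- Let s_1,…,s_N be distinct points in ℝ^d such that for every i, the distances ‖s_i − s_j‖ for j < i are pairwise distinct. For each m ≥ 1, let g_m(i) be the set of indices of the min(m, i−1) points among s_1,…,s_{i−1} nearest to s_i. Then g_m(i) ⊆ g_{m+1}(i) for all i and m, and consequently, for any multivariate normal vector x = (x_1,…,x_N) with positive definite covariance indexed by these points, the Vecchia approximations f̂_m with conditioning vectors g_m satisfy KL(f‖f̂_{m+1}) ≤ KL(f‖f̂_m) for all m. (Proposition 2, part 2: the KL divergence is nonincreasing in the number of nearest neighbors m.) -/

import Mathlib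

open MeasureTheory Real Finset Matrix

noncomputable section

/-- Density of the one-dimensional normal distribution `N(μ, v)` evaluated at `t`. -/
def gauss1 (μ v t : ℝ) : ℝ :=
  (Real.sqrt (2 * π * v))⁻¹ * Real.exp (-((t - μ) ^ 2) / (2 * v))

variable {ι : Type*} [Fintype ι] [DecidableEq ι]

/-- Joint density of the multivariate normal distribution `N(μ, K)` on `ι → ℝ`. -/
def gaussDensity (μ : ι → ℝ) (K : Matrix ι ι ℝ) (x : ι → ℝ) : ℝ :=
  (Real.sqrt ((2 * π) ^ (Fintype.card ι) * K.det))⁻¹ *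
    Real.exp (-(dotProduct (x - μ) (K⁻¹ *ᵥ (x - μ))) / 2)

/-- Submatrix of `K` with rows and columns in the index set `G`. -/
def subm (K : Matrix ι ι ℝ) (G : Finset ι) : Matrix G G ℝ :=
  Matrix.of fun j k => K j.1 k.1

/-- Gaussian conditional mean `E(x i | x_G)` for `x ~ N(μ, K)`, as a function of `x`. -/
def condMean (μ : ι → ℝ) (K : Matrix ι ι ℝ) (i : ι) (G : Finset ι) (x : ι → ℝ) : ℝ :=
  μ i + dotProduct (fun j : G => K i j.1)
    ((subm K G)⁻¹ *ᵥ fun j : G => x j.1 - μ j.1)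

/-- Gaussian conditional variance `Var(x i | x_G)` for `x ~ N(μ, K)`
(it does not depend on the value of `x_G`). -/
def condVar (K : Matrix ι ι ℝ) (i : ι) (G : Finset ι) : ℝ :=
  K i i - dotProduct (fun j : G => K i j.1)
    ((subm K G)⁻¹ *ᵥ fun j : G => K j.1 i)

/-- Gaussian conditional covariance `Cov(x a, x b | x_G)` for `x ~ N(0, K)`. -/
def condCov (K : Matrix ι ι ℝ) (a b : ι) (G : Finset ι) : ℝ :=
  K a b - dotProduct (fun j : G => K a j.1)
    ((subm K G)⁻¹ *ᵥ fun j : G => K j.1 b)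

/-- The exact Gaussian conditional density `f(x i | x_G)` for `x ~ N(μ, K)`. -/
def condDens (μ : ι → ℝ) (K : Matrix ι ι ℝ) (i : ι) (G : Finset ι) (x : ι → ℝ) : ℝ :=
  gauss1 (condMean μ K i G x) (condVar K i G) (x i)

/-- The general Vecchia approximation `f̂(x) = ∏ i, f(x i | x_{g i})` of `N(μ, K)`. -/
def vecchia (μ : ι → ℝ) (K : Matrix ι ι ℝ) (g : ι → Finset ι) (x : ι → ℝ) : ℝ :=
  ∏ i, condDens μ K i (g i) x

/-- Kullback–Leibler divergence `KL(f ‖ g) = ∫ f log(f/g)` between densities on `ι → ℝ`. -/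
def KLdiv (f g : (ι → ℝ) → ℝ) : ℝ :=
  ∫ x : ι → ℝ, f x * Real.log (f x / g x)

/-! For a Gaussian `f = N(0, K)` the log-ratio `log (f / f̂)` is a constant plus a quadratic form,
so only second moments enter the Kullback–Leibler divergence; these are read off from
`multivariateGaussian 0 K`, the image of the standard Gaussian under `√K`, whose density is `f`
by a linear change of variables. The divergence evaluates to
`(∑ i, log Var(x i | x_{g i}) - log det K) / 2`. The conditional variance `Var(x i | x_G)` is the
minimum of `E (x i - v ⬝ᵥ x)²` over vectors `v` supported on `G`, so it decreases when `G` grows.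
Nearest-neighbour sets are nested: if `j ∈ g m i` were missing from the (at least as large)
set `g (m + 1) i`, some `k ∈ g (m + 1) i \ g m i` would be both strictly farther from and strictly
nearer to `s i` than `j`. -/

open scoped ENNReal NNReal MatrixOrder

section GaussianDensity

open ProbabilityTheory WithLp

lemma pi_gaussianReal_eq_withDensity {n : Type*} [Fintype n] (μ : n → ℝ) {v : n → ℝ≥0}
    (hv : ∀ i, v i ≠ 0) :
    Measure.pi (fun i => gaussianReal (μ i) (v i)) =
      volume.withDensity (fun y => ∏ i, gaussianPDF (μ i) (v i) (y i)) := by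
  refine Measure.pi_eq (μ := fun i => gaussianReal (μ i) (v i)) fun s hs => ?_
  have hprod (y : n → ℝ) : ∏ i, gaussianPDF (μ i) (v i) (y i) =
      ENNReal.ofReal (∏ i, gaussianPDFReal (μ i) (v i) (y i)) := by
    rw [ENNReal.ofReal_prod_of_nonneg fun i _ => gaussianPDFReal_nonneg _ _ _]; rfl
  simp_rw [withDensity_apply _ (.univ_pi hs), hprod, volume_pi, Measure.restrict_pi_pi,
    gaussianReal_apply_eq_integral _ (hv _)]
  rw [← ofReal_integral_eq_lintegral_ofReal, integral_fintype_prod_eq_prod,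
    ENNReal.ofReal_prod_of_nonneg fun i _ =>
      setIntegral_nonneg (hs i) fun t _ => gaussianPDFReal_nonneg _ _ t]
  · exact Integrable.fintype_prod fun i => (integrable_gaussianPDFReal _ _).restrict
  · exact .of_forall fun y => Finset.prod_nonneg fun i _ => gaussianPDFReal_nonneg _ _ _

lemma map_mulVec_withDensity {A : Matrix ι ι ℝ} (hA : A.det ≠ 0) {p q : (ι → ℝ) → ℝ≥0∞}
    (hq : Measurable q) (hpq : ∀ y, p y = ENNReal.ofReal |A.det| * q (A *ᵥ y)) :
    (volume.withDensity p).map (A *ᵥ ·) = volume.withDensity q := by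
  have hA_meas : Measurable (A *ᵥ · : (ι → ℝ) → ι → ℝ) :=
    (Matrix.toLin' A).continuous_of_finiteDimensional.measurable
  ext s hs
  rw [Measure.map_apply hA_meas hs, withDensity_apply _ (hA_meas hs), withDensity_apply _ hs]
  simp_rw [hpq]
  rw [lintegral_const_mul _ (by fun_prop), ← setLIntegral_map hs hq hA_meas,
    show (A *ᵥ · : (ι → ℝ) → ι → ℝ) = Matrix.toLin' A from rfl,
    Real.map_matrix_volume_pi_eq_smul_volume_pi hA, Measure.restrict_smul, lintegral_smul_measure,
    smul_eq_mul, ← mul_assoc, ← ENNReal.ofReal_mul (abs_nonneg _), ← abs_mul, mul_inv_cancel₀ hA]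
  simp

lemma map_ofLp_multivariateGaussian (S : Matrix ι ι ℝ) :
    (multivariateGaussian 0 S).map ofLp =
      (Measure.pi fun _ : ι => gaussianReal 0 1).map (CFC.sqrt S *ᵥ ·) := by
  rw [multivariateGaussian, ← map_pi_eq_stdGaussian, Measure.map_map (by fun_prop) (by fun_prop),
    Measure.map_map (by fun_prop) (by fun_prop)]
  congr 1
  funext y
  simp

lemma Matrix.transpose_cfcSqrt (K : Matrix ι ι ℝ) : (CFC.sqrt K)ᵀ = CFC.sqrt K :=
  (CFC.sqrt_nonneg K).posSemidef.isHermitian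

lemma Matrix.PosDef.det_cfcSqrt_ne_zero {K : Matrix ι ι ℝ} (hK : K.PosDef) :
    (CFC.sqrt K).det ≠ 0 := fun h => hK.det_pos.ne' <| by
  rw [← CFC.sqrt_mul_sqrt_self K hK.posSemidef.nonneg, Matrix.det_mul, h, zero_mul]

lemma dotProduct_inv_mulVec_of_mul_self {K A : Matrix ι ι ℝ} (hAA : A * A = K) (hAT : Aᵀ = A)
    (hA : A.det ≠ 0) (y : ι → ℝ) : A *ᵥ y ⬝ᵥ K⁻¹ *ᵥ (A *ᵥ y) = y ⬝ᵥ y := by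
  rw [← hAA, Matrix.mul_inv_rev, Matrix.mulVec_mulVec, Matrix.mul_assoc,
    Matrix.nonsing_inv_mul _ hA.isUnit, Matrix.mul_one, Matrix.dotProduct_mulVec,
    ← Matrix.vecMul_transpose, hAT, Matrix.vecMul_vecMul, Matrix.mul_nonsing_inv _ hA.isUnit,
    Matrix.vecMul_one]

lemma abs_det_mul_gaussDensity_mulVec {K A : Matrix ι ι ℝ} (hAA : A * A = K) (hAT : Aᵀ = A)
    (hA : A.det ≠ 0) (y : ι → ℝ) :
    |A.det| * gaussDensity 0 K (A *ᵥ y) = ∏ i, gaussianPDFReal 0 1 (y i) := by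
  have hpow : √((2 * π) ^ Fintype.card ι) = √(2 * π) ^ Fintype.card ι := by
    rw [← Real.sqrt_sq (by positivity : 0 ≤ √(2 * π) ^ Fintype.card ι), ← pow_mul,
      mul_comm (Fintype.card ι) 2, pow_mul, Real.sq_sqrt (by positivity)]
  have hnorm : √((2 * π) ^ Fintype.card ι * K.det) = √(2 * π) ^ Fintype.card ι * |A.det| := by
    rw [← hAA, Matrix.det_mul, Real.sqrt_mul (by positivity), Real.sqrt_mul_self_eq_abs, hpow]
  simp only [gaussDensity, sub_zero, dotProduct_inv_mulVec_of_mul_self hAA hAT hA, hnorm,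
    gaussianPDFReal_def, NNReal.coe_one, mul_one]
  rw [Finset.prod_mul_distrib, Finset.prod_const, Finset.card_univ, ← Real.exp_sum, inv_pow,
    dotProduct, ← Finset.sum_div, ← Finset.sum_neg_distrib, mul_inv, ← mul_assoc, ← mul_assoc,
    mul_comm |A.det|, mul_assoc _ |A.det|, mul_inv_cancel₀ (abs_ne_zero.2 hA), mul_one]
  simp only [sq]

lemma continuous_gaussDensity (μ : ι → ℝ) (K : Matrix ι ι ℝ) : Continuous (gaussDensity μ K) := by
  unfold gaussDensity
  fun_prop

lemma gaussDensity_pos {K : Matrix ι ι ℝ} (hK : K.PosDef) (x : ι → ℝ) :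
    0 < gaussDensity 0 K x := by
  have := hK.det_pos
  unfold gaussDensity
  positivity

theorem map_ofLp_multivariateGaussian_eq_withDensity {K : Matrix ι ι ℝ} (hK : K.PosDef) :
    (multivariateGaussian 0 K).map ofLp =
      volume.withDensity (fun x => ENNReal.ofReal (gaussDensity 0 K x)) := by
  have hAA := CFC.sqrt_mul_sqrt_self K hK.posSemidef.nonneg
  have hA := hK.det_cfcSqrt_ne_zero
  rw [map_ofLp_multivariateGaussian, pi_gaussianReal_eq_withDensity _ fun _ => one_ne_zero]
  refine map_mulVec_withDensity hA (continuous_gaussDensity 0 K).measurable.ennreal_ofReal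
    fun y => ?_
  rw [← ENNReal.ofReal_mul (abs_nonneg _),
    abs_det_mul_gaussDensity_mulVec hAA K.transpose_cfcSqrt hA y,
    ENNReal.ofReal_prod_of_nonneg fun i _ => gaussianPDFReal_nonneg 0 1 _]
  rfl

lemma integral_gaussDensity_mul {K : Matrix ι ι ℝ} (hK : K.PosDef) (φ : (ι → ℝ) → ℝ) :
    ∫ x, gaussDensity 0 K x * φ x = ∫ z, φ (ofLp z) ∂multivariateGaussian 0 K := by
  have h := integral_map_equiv (μ := multivariateGaussian 0 K)
    (MeasurableEquiv.toLp 2 (ι → ℝ)).symm φ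
  rw [MeasurableEquiv.coe_toLp_symm] at h
  rw [← h, map_ofLp_multivariateGaussian_eq_withDensity hK,
    integral_withDensity_eq_integral_toReal_smul
      (continuous_gaussDensity 0 K).measurable.ennreal_ofReal
      (.of_forall fun _ => ENNReal.ofReal_lt_top)]
  simp_rw [ENNReal.toReal_ofReal (gaussDensity_pos hK _).le, smul_eq_mul]

lemma integrable_gaussDensity_mul_iff {K : Matrix ι ι ℝ} (hK : K.PosDef) {φ : (ι → ℝ) → ℝ} :
    Integrable (fun x => gaussDensity 0 K x * φ x) ↔
      Integrable (fun z => φ (ofLp z)) (multivariateGaussian 0 K) := by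
  have h := integrable_map_equiv (μ := multivariateGaussian 0 K)
    (MeasurableEquiv.toLp 2 (ι → ℝ)).symm φ
  rw [MeasurableEquiv.coe_toLp_symm] at h
  rw [← Function.comp_def, ← h, map_ofLp_multivariateGaussian_eq_withDensity hK,
    integrable_withDensity_iff_integrable_smul'
      (continuous_gaussDensity 0 K).measurable.ennreal_ofReal
      (.of_forall fun _ => ENNReal.ofReal_lt_top)]
  simp_rw [ENNReal.toReal_ofReal (gaussDensity_pos hK _).le, smul_eq_mul]

lemma integrable_gaussDensity {K : Matrix ι ι ℝ} (hK : K.PosDef) :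
    Integrable (gaussDensity 0 K) := by
  simpa using (integrable_gaussDensity_mul_iff hK (φ := fun _ => 1)).2 (integrable_const _)

lemma integral_gaussDensity {K : Matrix ι ι ℝ} (hK : K.PosDef) : ∫ x, gaussDensity 0 K x = 1 := by
  simpa using integral_gaussDensity_mul hK (fun _ => 1)

lemma integrable_gaussDensity_mul_dotProduct_mul_dotProduct {K : Matrix ι ι ℝ} (hK : K.PosDef)
    (u v : ι → ℝ) : Integrable fun x => gaussDensity 0 K x * ((u ⬝ᵥ x) * (v ⬝ᵥ x)) := by
  have h := IsGaussian.memLp_two_id (μ := multivariateGaussian 0 K)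
  refine (integrable_gaussDensity_mul_iff hK).2 ?_
  convert MemLp.integrable_mul (h.continuousLinearMap_comp (innerSL ℝ (toLp 2 u)))
    (h.continuousLinearMap_comp (innerSL ℝ (toLp 2 v))) using 2 with z
  simp [EuclideanSpace.inner_eq_star_dotProduct, dotProduct_comm]

lemma integral_gaussDensity_mul_dotProduct_mul_dotProduct {K : Matrix ι ι ℝ} (hK : K.PosDef)
    (u v : ι → ℝ) : ∫ x, gaussDensity 0 K x * ((u ⬝ᵥ x) * (v ⬝ᵥ x)) = u ⬝ᵥ K *ᵥ v := by
  rw [integral_gaussDensity_mul hK, ← covarianceBilin_multivariateGaussian (μ := 0)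
    hK.posSemidef (toLp 2 u) (toLp 2 v), covarianceBilin_apply IsGaussian.memLp_two_id]
  simp [EuclideanSpace.inner_eq_star_dotProduct, dotProduct_comm]

end GaussianDensity

section ConditionalVariance

lemma Matrix.PosDef.transpose_eq_self {n : Type*} {K : Matrix n n ℝ} (hK : K.PosDef) : Kᵀ = K :=
  hK.isHermitian

/-- Completing the square; equality holds at `w = M⁻¹ *ᵥ b`. -/
lemma Matrix.PosDef.two_mul_dotProduct_sub_le {n : Type*} [Fintype n] [DecidableEq n]
    {M : Matrix n n ℝ} (hM : M.PosDef) (b w : n → ℝ) :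
    2 * (w ⬝ᵥ b) - w ⬝ᵥ M *ᵥ w ≤ b ⬝ᵥ M⁻¹ *ᵥ b := by
  set c := M⁻¹ *ᵥ b
  have hMc : M *ᵥ c = b := by
    rw [Matrix.mulVec_mulVec, Matrix.mul_nonsing_inv _ hM.det_pos.ne'.isUnit, Matrix.one_mulVec]
  have hcw : c ⬝ᵥ M *ᵥ w = w ⬝ᵥ b := by
    rw [Matrix.dotProduct_mulVec, ← Matrix.mulVec_transpose, hM.transpose_eq_self, hMc,
      dotProduct_comm]
  have hsq : 0 ≤ (w - c) ⬝ᵥ M *ᵥ (w - c) := by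
    simpa using hM.posSemidef.dotProduct_mulVec_nonneg (w - c)
  rw [Matrix.mulVec_sub, dotProduct_sub, sub_dotProduct, sub_dotProduct, hMc, hcw,
    dotProduct_comm c b] at hsq
  linarith

lemma extend_val_apply_of_notMem {n : Type*} {G : Finset n} (w : G → ℝ) {a : n} (ha : a ∉ G) :
    Function.extend ((↑) : G → n) w 0 a = 0 :=
  Function.extend_apply' _ _ _ fun ⟨j, hj⟩ => ha (hj ▸ j.2)

lemma extend_val_comp_val {n : Type*} {G : Finset n} (w : G → ℝ) :
    (fun j : G => Function.extend ((↑) : G → n) w 0 j) = w :=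
  Function.extend_comp Subtype.val_injective w 0

lemma dotProduct_eq_of_support_subset {n : Type*} [Fintype n] {G : Finset n} {v : n → ℝ}
    (hv : ∀ a ∉ G, v a = 0) (u : n → ℝ) :
    v ⬝ᵥ u = (fun j : G => v j) ⬝ᵥ fun j : G => u j := by
  rw [dotProduct, ← Finset.sum_subset (Finset.subset_univ G)
    fun a _ ha => by rw [hv a ha, zero_mul], ← Finset.sum_coe_sort G]
  rfl

lemma subm_posDef {n : Type*} {K : Matrix n n ℝ} (hK : K.PosDef) (G : Finset n) :
    (subm K G).PosDef :=
  hK.submatrix Subtype.val_injective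

lemma condVar_eq_sub_dotProduct {n : Type*} [DecidableEq n] {K : Matrix n n ℝ} (hK : K.PosDef)
    (G : Finset n) (i : n) :
    condVar K i G = K i i - (fun j : G => K j i) ⬝ᵥ (subm K G)⁻¹ *ᵥ fun j : G => K j i := by
  rw [condVar, show (fun j : G => K i j) = fun j : G => K j i from
    funext fun j => congrFun (congrFun hK.transpose_eq_self j) i]

variable {K : Matrix ι ι ℝ}

/-- The vector `r` with `x i - E(x i | x_G) = r ⬝ᵥ x`: the unit vector at `i` minus the regression
coefficients `(K_GG)⁻¹ K_Gi`, extended by zero off `G`. -/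
def condResidual (K : Matrix ι ι ℝ) (G : Finset ι) (i : ι) : ι → ℝ :=
  Pi.single i 1 - Function.extend ((↑) : G → ι) ((subm K G)⁻¹ *ᵥ fun j : G => K j i) 0

lemma sub_condMean_eq_dotProduct (hK : K.PosDef) (G : Finset ι) (i : ι) (x : ι → ℝ) :
    x i - condMean 0 K i G x = condResidual K G i ⬝ᵥ x := by
  have hMT : (subm K G)⁻¹ᵀ = (subm K G)⁻¹ := by
    rw [Matrix.transpose_nonsing_inv, (subm_posDef hK G).transpose_eq_self]
  have hrow : (fun j : G => K i j) = fun j : G => K j i :=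
    funext fun j => congrFun (congrFun hK.transpose_eq_self j) i
  rw [condResidual, sub_dotProduct, single_one_dotProduct,
    dotProduct_eq_of_support_subset fun a => extend_val_apply_of_notMem _,
    extend_val_comp_val, condMean, hrow,
    Matrix.dotProduct_mulVec, ← Matrix.mulVec_transpose, hMT]
  simp

lemma quadForm_single_sub (hKT : Kᵀ = K) {G : Finset ι} {v : ι → ℝ} (hv : ∀ a ∉ G, v a = 0)
    (i : ι) :
    (Pi.single i 1 - v) ⬝ᵥ K *ᵥ (Pi.single i 1 - v) =
      K i i - 2 * ((fun j : G => v j) ⬝ᵥ fun j : G => K j i) +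
        (fun j : G => v j) ⬝ᵥ subm K G *ᵥ fun j : G => v j := by
  have hsymm : Pi.single i 1 ⬝ᵥ K *ᵥ v = v ⬝ᵥ K *ᵥ Pi.single i 1 := by
    rw [Matrix.dotProduct_mulVec, ← Matrix.mulVec_transpose, hKT, dotProduct_comm]
  have hcross : v ⬝ᵥ K *ᵥ Pi.single i 1 = (fun j : G => v j) ⬝ᵥ fun j : G => K j i := by
    rw [dotProduct_eq_of_support_subset hv]
    simp
  have hquad : v ⬝ᵥ K *ᵥ v = (fun j : G => v j) ⬝ᵥ subm K G *ᵥ fun j : G => v j := by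
    rw [dotProduct_eq_of_support_subset hv]
    congr 1
    funext j
    rw [Matrix.mulVec, dotProduct_comm, dotProduct_eq_of_support_subset hv, dotProduct_comm]
    rfl
  simp only [Matrix.mulVec_sub, dotProduct_sub, sub_dotProduct, hsymm, hcross, hquad]
  simp
  ring

lemma condVar_le_quadForm (hK : K.PosDef) {G : Finset ι} {v : ι → ℝ} (hv : ∀ a ∉ G, v a = 0)
    (i : ι) : condVar K i G ≤ (Pi.single i 1 - v) ⬝ᵥ K *ᵥ (Pi.single i 1 - v) := by
  rw [quadForm_single_sub hK.transpose_eq_self hv, condVar_eq_sub_dotProduct hK]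
  linarith [(subm_posDef hK G).two_mul_dotProduct_sub_le (fun j : G => K j i) fun j : G => v j]

lemma condVar_eq_quadForm_condResidual (hK : K.PosDef) (G : Finset ι) (i : ι) :
    condVar K i G = condResidual K G i ⬝ᵥ K *ᵥ condResidual K G i := by
  rw [condResidual]
  set c := (subm K G)⁻¹ *ᵥ fun j : G => K j i
  have hc : subm K G *ᵥ c = fun j : G => K j i := by
    rw [Matrix.mulVec_mulVec, Matrix.mul_nonsing_inv _ (subm_posDef hK G).det_pos.ne'.isUnit,
      Matrix.one_mulVec]
  rw [quadForm_single_sub hK.transpose_eq_self fun a => extend_val_apply_of_notMem c,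
    extend_val_comp_val, hc,
    condVar_eq_sub_dotProduct hK, dotProduct_comm c]
  ring

lemma condVar_pos (hK : K.PosDef) {G : Finset ι} {i : ι} (hi : i ∉ G) : 0 < condVar K i G := by
  have hri : condResidual K G i i = 1 := by
    simp [condResidual, extend_val_apply_of_notMem _ hi]
  rw [condVar_eq_quadForm_condResidual hK]
  exact hK.dotProduct_mulVec_pos fun h => one_ne_zero (hri.symm.trans (congrFun h i))

lemma condVar_antitone (hK : K.PosDef) {G G' : Finset ι} (hGG' : G ⊆ G') (i : ι) :
    condVar K i G' ≤ condVar K i G := by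
  rw [condVar_eq_quadForm_condResidual hK G i]
  exact condVar_le_quadForm hK (fun a ha => extend_val_apply_of_notMem _ fun h => ha (hGG' h)) i

end ConditionalVariance

section KullbackLeibler

variable {K : Matrix ι ι ℝ}

lemma gauss1_pos {v : ℝ} (hv : 0 < v) (μ t : ℝ) : 0 < gauss1 μ v t := by
  unfold gauss1
  positivity

lemma log_gauss1 {v : ℝ} (hv : 0 < v) (μ t : ℝ) :
    Real.log (gauss1 μ v t) = -Real.log (2 * π * v) / 2 + (-(2 * v)⁻¹) * (t - μ) ^ 2 := by
  rw [gauss1, Real.log_mul (by positivity) (Real.exp_pos _).ne', Real.log_inv,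
    Real.log_sqrt (by positivity), Real.log_exp]
  ring

lemma log_gaussDensity (hK : K.PosDef) (x : ι → ℝ) :
    Real.log (gaussDensity 0 K x) =
      -Real.log ((2 * π) ^ Fintype.card ι * K.det) / 2 + (-2⁻¹) * (x ⬝ᵥ K⁻¹ *ᵥ x) := by
  have := hK.det_pos
  rw [gaussDensity, Real.log_mul (by positivity) (Real.exp_pos _).ne', Real.log_inv,
    Real.log_sqrt (by positivity), Real.log_exp, sub_zero]
  ring

lemma log_condDens (hK : K.PosDef) {G : Finset ι} {i : ι} (hi : i ∉ G) (x : ι → ℝ) :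
    Real.log (condDens 0 K i G x) = -Real.log (2 * π * condVar K i G) / 2 +
      (-(2 * condVar K i G)⁻¹) * ((condResidual K G i ⬝ᵥ x) * (condResidual K G i ⬝ᵥ x)) := by
  rw [condDens, log_gauss1 (condVar_pos hK hi), sub_condMean_eq_dotProduct hK, sq]

lemma integrable_gaussDensity_mul_const_add (hK : K.PosDef) {φ : (ι → ℝ) → ℝ}
    (hφ : Integrable fun x => gaussDensity 0 K x * φ x) (a b : ℝ) :
    Integrable fun x => gaussDensity 0 K x * (a + b * φ x) := by
  simp_rw [mul_add, mul_left_comm _ b, mul_comm _ a]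
  exact ((integrable_gaussDensity hK).const_mul a).add (hφ.const_mul b)

lemma integral_gaussDensity_mul_const_add (hK : K.PosDef) {φ : (ι → ℝ) → ℝ}
    (hφ : Integrable fun x => gaussDensity 0 K x * φ x) (a b : ℝ) :
    ∫ x, gaussDensity 0 K x * (a + b * φ x) = a + b * ∫ x, gaussDensity 0 K x * φ x := by
  simp_rw [mul_add, mul_left_comm _ b, mul_comm _ a]
  rw [integral_add ((integrable_gaussDensity hK).const_mul a) (hφ.const_mul b),
    integral_const_mul, integral_const_mul, integral_gaussDensity hK, mul_one]

lemma dotProduct_mulVec_eq_sum (M : Matrix ι ι ℝ) (x : ι → ℝ) :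
    x ⬝ᵥ M *ᵥ x = ∑ a, (Pi.single a 1 ⬝ᵥ x) * ((fun b => M a b) ⬝ᵥ x) := by
  simp only [single_one_dotProduct]
  rfl

lemma integrable_gaussDensity_mul_dotProduct_mulVec (hK : K.PosDef) (M : Matrix ι ι ℝ) :
    Integrable fun x => gaussDensity 0 K x * (x ⬝ᵥ M *ᵥ x) := by
  simp_rw [dotProduct_mulVec_eq_sum, Finset.mul_sum]
  exact integrable_finsetSum _ fun a _ =>
    integrable_gaussDensity_mul_dotProduct_mul_dotProduct hK _ _

lemma integral_gaussDensity_mul_dotProduct_mulVec (hK : K.PosDef) (M : Matrix ι ι ℝ) :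
    ∫ x, gaussDensity 0 K x * (x ⬝ᵥ M *ᵥ x) = (M * K).trace := by
  simp_rw [dotProduct_mulVec_eq_sum, Finset.mul_sum]
  rw [integral_finsetSum _ fun a _ => integrable_gaussDensity_mul_dotProduct_mul_dotProduct hK _ _]
  simp_rw [integral_gaussDensity_mul_dotProduct_mul_dotProduct hK]
  refine Finset.sum_congr rfl fun a _ => ?_
  rw [single_one_dotProduct, Matrix.diag_apply, Matrix.mul_apply, Matrix.mulVec, dotProduct]
  refine Finset.sum_congr rfl fun b _ => ?_
  rw [mul_comm, ← congrFun (congrFun hK.transpose_eq_self a) b]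
  rfl

lemma integrable_gaussDensity_mul_log_gaussDensity (hK : K.PosDef) :
    Integrable fun x => gaussDensity 0 K x * Real.log (gaussDensity 0 K x) := by
  simp_rw [log_gaussDensity hK]
  exact integrable_gaussDensity_mul_const_add hK
    (integrable_gaussDensity_mul_dotProduct_mulVec hK _) _ _

lemma integral_gaussDensity_mul_log_gaussDensity (hK : K.PosDef) :
    ∫ x, gaussDensity 0 K x * Real.log (gaussDensity 0 K x) =
      -(Real.log ((2 * π) ^ Fintype.card ι * K.det) + Fintype.card ι) / 2 := by
  simp_rw [log_gaussDensity hK]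
  rw [integral_gaussDensity_mul_const_add hK (integrable_gaussDensity_mul_dotProduct_mulVec hK _),
    integral_gaussDensity_mul_dotProduct_mulVec hK, Matrix.nonsing_inv_mul _ hK.det_pos.ne'.isUnit,
    Matrix.trace_one]
  ring

lemma integrable_gaussDensity_mul_log_condDens (hK : K.PosDef) {G : Finset ι} {i : ι}
    (hi : i ∉ G) : Integrable fun x => gaussDensity 0 K x * Real.log (condDens 0 K i G x) := by
  simp_rw [log_condDens hK hi]
  exact integrable_gaussDensity_mul_const_add hK
    (integrable_gaussDensity_mul_dotProduct_mul_dotProduct hK _ _) _ _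

lemma integral_gaussDensity_mul_log_condDens (hK : K.PosDef) {G : Finset ι} {i : ι} (hi : i ∉ G) :
    ∫ x, gaussDensity 0 K x * Real.log (condDens 0 K i G x) =
      -(Real.log (2 * π * condVar K i G) + 1) / 2 := by
  simp_rw [log_condDens hK hi]
  rw [integral_gaussDensity_mul_const_add hK
      (integrable_gaussDensity_mul_dotProduct_mul_dotProduct hK _ _),
    integral_gaussDensity_mul_dotProduct_mul_dotProduct hK, ← condVar_eq_quadForm_condResidual hK]
  field_simp [(condVar_pos hK hi).ne']
  ring

theorem KLdiv_gaussDensity_vecchia (hK : K.PosDef) {g : ι → Finset ι} (hg : ∀ i, i ∉ g i) :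
    KLdiv (gaussDensity 0 K) (vecchia 0 K g) =
      (∑ i, Real.log (condVar K i (g i)) - Real.log K.det) / 2 := by
  have hcond (i : ι) (x : ι → ℝ) : 0 < condDens 0 K i (g i) x :=
    gauss1_pos (condVar_pos hK (hg i)) _ _
  have hlog (x : ι → ℝ) : gaussDensity 0 K x * Real.log (gaussDensity 0 K x / vecchia 0 K g x) =
      gaussDensity 0 K x * Real.log (gaussDensity 0 K x) -
        ∑ i, gaussDensity 0 K x * Real.log (condDens 0 K i (g i) x) := by
    rw [vecchia, Real.log_div (gaussDensity_pos hK x).ne'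
      (Finset.prod_pos fun i _ => hcond i x).ne', Real.log_prod fun i _ => (hcond i x).ne', mul_sub, Finset.mul_sum]
  have hlogv (i : ι) : Real.log (2 * π * condVar K i (g i)) =
      Real.log (2 * π) + Real.log (condVar K i (g i)) :=
    Real.log_mul (by positivity) (condVar_pos hK (hg i)).ne'
  rw [KLdiv]
  simp_rw [hlog]
  rw [integral_sub (integrable_gaussDensity_mul_log_gaussDensity hK)
      (integrable_finsetSum _ fun i _ => integrable_gaussDensity_mul_log_condDens hK (hg i)),
    integral_finsetSum _ fun i _ => integrable_gaussDensity_mul_log_condDens hK (hg i),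
    integral_gaussDensity_mul_log_gaussDensity hK,
    Finset.sum_congr rfl fun i _ => integral_gaussDensity_mul_log_condDens hK (hg i),
    Real.log_mul (by positivity) hK.det_pos.ne', Real.log_pow]
  simp only [hlogv]
  rw [← Finset.sum_div, Finset.sum_neg_distrib, Finset.sum_add_distrib, Finset.sum_add_distrib,
    Finset.sum_const, Finset.sum_const, Finset.card_univ, nsmul_eq_mul, nsmul_eq_mul]
  ring

end KullbackLeibler

lemma Finset.subset_of_card_le_of_forall_lt {α β : Type*} [LinearOrder β] {S A B : Finset α}
    (d : α → β) (hAS : A ⊆ S) (hBS : B ⊆ S) (hcard : #A ≤ #B)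
    (hA : ∀ j ∈ A, ∀ k ∈ S, k ∉ A → d j < d k) (hB : ∀ j ∈ B, ∀ k ∈ S, k ∉ B → d j < d k) :
    A ⊆ B := by
  classical
  intro j hjA
  by_contra hjB
  obtain ⟨k, hkB, hk⟩ : ∃ k ∈ B, k ∉ A.erase j := exists_mem_notMem_of_card_lt_card <| by
    rw [card_erase_of_mem hjA]
    have := card_pos.2 ⟨j, hjA⟩
    omega
  have hkA : k ∉ A := fun h => hk (mem_erase.2 ⟨fun hkj => hjB (hkj ▸ hkB), h⟩)
  exact lt_asymm (hA j hjA k (hBS hkB) hkA) (hB k hkB j (hAS hjA) hjB)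

theorem kl_antitone_in_nearest_neighbors_general
    {N d : ℕ} (s : Fin N → EuclideanSpace ℝ (Fin d))
    (g : ℕ → Fin N → Finset (Fin N))
    (hsub : ∀ m, 1 ≤ m → ∀ i, g m i ⊆ Finset.Iio i)
    (hcard : ∀ m, 1 ≤ m → ∀ i, (g m i).card = min m (i : ℕ))
    (hnear : ∀ m, 1 ≤ m → ∀ i, ∀ j ∈ g m i, ∀ k ∈ Finset.Iio i, k ∉ g m i →
      dist (s i) (s j) < dist (s i) (s k)) :
    (∀ m, 1 ≤ m → ∀ i, g m i ⊆ g (m + 1) i) ∧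
      ∀ (K : Matrix (Fin N) (Fin N) ℝ), K.PosDef → ∀ m, 1 ≤ m →
        KLdiv (gaussDensity 0 K) (vecchia 0 K (g (m + 1))) ≤
          KLdiv (gaussDensity 0 K) (vecchia 0 K (g m)) := by
  have hnested (m : ℕ) (hm : 1 ≤ m) (i : Fin N) : g m i ⊆ g (m + 1) i :=
    Finset.subset_of_card_le_of_forall_lt (fun j => dist (s i) (s j)) (hsub m hm i)
      (hsub (m + 1) (by omega) i) (by rw [hcard m hm i, hcard (m + 1) (by omega) i]; omega)
      (hnear m hm i) (hnear (m + 1) (by omega) i)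
  have hirrefl (m : ℕ) (hm : 1 ≤ m) (i : Fin N) : i ∉ g m i := fun h =>
    lt_irrefl i (Finset.mem_Iio.1 (hsub m hm i h))
  refine ⟨hnested, fun K hK m hm => ?_⟩
  rw [KLdiv_gaussDensity_vecchia hK (hirrefl (m + 1) (by omega)),
    KLdiv_gaussDensity_vecchia hK (hirrefl m hm)]
  gcongr with i
  · exact condVar_pos hK (hirrefl (m + 1) (by omega) i)
  · exact condVar_antitone hK (hnested m hm i) i

/-- **Proposition 2, part 2: nearest-neighbor conditioning sets are nested in `m`, and the KL
divergence of the Vecchia approximation is nonincreasing in the number of neighbors `m`.**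
Here `g m i` is the (unique, by the distinct-distance assumption) set of the `min(m, i−1)`
previously ordered points nearest to `s i`. -/
theorem kl_antitone_in_nearest_neighbors
    {N d : ℕ} (s : Fin N → EuclideanSpace ℝ (Fin d))
    (hinj : Function.Injective s)
    (hdist : ∀ i j k : Fin N, j < i → k < i → j ≠ k →
      dist (s i) (s j) ≠ dist (s i) (s k))
    (g : ℕ → Fin N → Finset (Fin N))
    (hsub : ∀ m, 1 ≤ m → ∀ i, g m i ⊆ Finset.Iio i)
    (hcard : ∀ m, 1 ≤ m → ∀ i, (g m i).card = min m (i : ℕ))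
    (hnear : ∀ m, 1 ≤ m → ∀ i, ∀ j ∈ g m i, ∀ k ∈ Finset.Iio i, k ∉ g m i →
      dist (s i) (s j) < dist (s i) (s k)) :
    (∀ m, 1 ≤ m → ∀ i, g m i ⊆ g (m + 1) i) ∧
      ∀ (K : Matrix (Fin N) (Fin N) ℝ), K.PosDef → ∀ m, 1 ≤ m →
        KLdiv (gaussDensity 0 K) (vecchia 0 K (g (m + 1))) ≤
          KLdiv (gaussDensity 0 K) (vecchia 0 K (g m)) :=
  kl_antitone_in_nearest_neighbors_general s g hsub hcard hnear

end
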